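/- arXiv:1905.05499 — 2 statements merged into one kernel-verified Lean document; each statement's English description precedes it below -/
import Mathlib

section
/- Let m ≥ 1. There exists a constant c = c(m) such that for all u, a ∈ ℝ^N one has b[⌊u⌋^m, ⌊a⌋^m] ≤ c·|⌊u⌋^m - ⌊a⌋^m|^{(m+1)/m}, where b[⌊u⌋^m, ⌊a⌋^m] := (m/(m+1))·(|a|^{m+1} - |u|^{m+1}) - u·(⌊a⌋^m - ⌊u⌋^m). -/
/-!
By Young's inequality, `b[⌊u⌋^m, ⌊a⌋^m] ≤ ⟪a - u, ⌊a⌋^m - ⌊u⌋^m⟫`. For `m ≥ 1` the signed power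
is strongly monotone, `2^{-m} |x - y|^{m+1} ≤ ⟪⌊x⌋^m - ⌊y⌋^m, x - y⟫`, which together with
Cauchy–Schwarz makes its inverse `1/m`-Hölder: `|x - y| ≤ 2 |⌊x⌋^m - ⌊y⌋^m|^{1/m}`. A last
Cauchy–Schwarz gives the claim with `c = 2`.
-/

open Real

/-- Signed power `⌊v⌋^α := |v|^{α-1} v` on `ℝ^N`. -/
noncomputable def spow {N : ℕ} (α : ℝ) (v : EuclideanSpace ℝ (Fin N)) :
    EuclideanSpace ℝ (Fin N) := ‖v‖ ^ (α - 1) • v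

/-- The boundary term `b[⌊u⌋^m, ⌊a⌋^m]`. -/
noncomputable def bTerm {N : ℕ} (m : ℝ) (u a : EuclideanSpace ℝ (Fin N)) : ℝ :=
  m / (m + 1) * (‖a‖ ^ (m + 1) - ‖u‖ ^ (m + 1)) -
    (inner ℝ u (spow m a - spow m u) : ℝ)

open RealInnerProductSpace

lemma Real.rpow_add_le_two_rpow_mul_add {a b p : ℝ} (ha : 0 ≤ a) (hb : 0 ≤ b) (hp : 0 ≤ p) :
    (a + b) ^ p ≤ 2 ^ p * (a ^ p + b ^ p) := by
  wlog hab : a ≤ b generalizing a b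
  · simpa only [add_comm] using this hb ha (le_of_not_ge hab)
  calc (a + b) ^ p ≤ (2 * b) ^ p := rpow_le_rpow (by positivity) (by linarith) hp
    _ = 2 ^ p * b ^ p := mul_rpow zero_le_two hb
    _ ≤ 2 ^ p * (a ^ p + b ^ p) := by
      gcongr
      exact le_add_of_nonneg_left (rpow_nonneg ha p)

section SignedPower

variable {N : ℕ} {m : ℝ}

lemma norm_spow (hm : m ≠ 0) (v : EuclideanSpace ℝ (Fin N)) : ‖spow m v‖ = ‖v‖ ^ m := by
  rw [spow, norm_smul, norm_of_nonneg (rpow_nonneg (norm_nonneg v) _),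
    ← rpow_add_one' (norm_nonneg v) (by simpa using hm), sub_add_cancel]

lemma inner_self_spow (hm : m + 1 ≠ 0) (v : EuclideanSpace ℝ (Fin N)) :
    ⟪v, spow m v⟫ = ‖v‖ ^ (m + 1) := by
  rw [spow, real_inner_smul_right, real_inner_self_eq_norm_sq, ← rpow_natCast,
    ← rpow_add' (norm_nonneg v) (by convert hm using 1; push_cast; ring)]
  push_cast
  ring_nf

lemma inner_spow_sub_spow_sub (m : ℝ) (x y : EuclideanSpace ℝ (Fin N)) :
    ⟪spow m x - spow m y, x - y⟫ =
      ((‖x‖ ^ (m - 1) + ‖y‖ ^ (m - 1)) * ‖x - y‖ ^ 2 +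
        (‖x‖ ^ (m - 1) - ‖y‖ ^ (m - 1)) * (‖x‖ ^ 2 - ‖y‖ ^ 2)) / 2 := by
  simp only [spow, inner_sub_left, inner_sub_right, real_inner_smul_left,
    real_inner_self_eq_norm_sq, real_inner_comm y x, norm_sub_sq_real x y]
  ring

lemma bTerm_le_inner (hm : 0 < m) (u a : EuclideanSpace ℝ (Fin N)) :
    bTerm m u a ≤ ⟪a - u, spow m a - spow m u⟫ := by
  have hpq : (m + 1).HolderConjugate ((m + 1) / m) :=
    (holderConjugate_iff_eq_conjExponent (by linarith)).2 (by rw [add_sub_cancel_right])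
  have hyoung : ‖a‖ * ‖u‖ ^ m ≤ ‖a‖ ^ (m + 1) / (m + 1) + m / (m + 1) * ‖u‖ ^ (m + 1) := by
    have h := young_inequality_of_nonneg (norm_nonneg a) (rpow_nonneg (norm_nonneg u) m) hpq
    rwa [← rpow_mul (norm_nonneg u), mul_div_cancel₀ _ hm.ne', div_div_eq_mul_div,
      mul_comm _ m, mul_div_right_comm] at h
  have hcs : ⟪a, spow m u⟫ ≤ ‖a‖ * ‖u‖ ^ m :=
    norm_spow hm.ne' u ▸ real_inner_le_norm a (spow m u)
  rw [bTerm, inner_sub_left, inner_sub_right a, inner_self_spow (by linarith)]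
  have : m / (m + 1) * ‖a‖ ^ (m + 1) = ‖a‖ ^ (m + 1) - ‖a‖ ^ (m + 1) / (m + 1) := by
    field_simp
    ring
  linarith

lemma norm_sub_rpow_le_two_rpow_mul_inner (hm : 1 ≤ m) (x y : EuclideanSpace ℝ (Fin N)) :
    ‖x - y‖ ^ (m + 1) ≤ 2 ^ m * ⟪spow m x - spow m y, x - y⟫ := by
  have hm1 : 0 ≤ m - 1 := by linarith
  have hsame_sign : 0 ≤ (‖x‖ ^ (m - 1) - ‖y‖ ^ (m - 1)) * (‖x‖ ^ 2 - ‖y‖ ^ 2) := by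
    rcases le_total ‖x‖ ‖y‖ with h | h
    · exact mul_nonneg_of_nonpos_of_nonpos
        (sub_nonpos.2 (rpow_le_rpow (norm_nonneg x) h hm1))
        (sub_nonpos.2 (pow_le_pow_left₀ (norm_nonneg x) h 2))
    · exact mul_nonneg (sub_nonneg.2 (rpow_le_rpow (norm_nonneg y) h hm1))
        (sub_nonneg.2 (pow_le_pow_left₀ (norm_nonneg y) h 2))
  have htriangle : ‖x - y‖ ^ (m - 1) ≤ 2 ^ (m - 1) * (‖x‖ ^ (m - 1) + ‖y‖ ^ (m - 1)) :=
    (rpow_le_rpow (norm_nonneg _) (norm_sub_le x y) hm1).trans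
      (rpow_add_le_two_rpow_mul_add (norm_nonneg x) (norm_nonneg y) hm1)
  have hsplit : ‖x - y‖ ^ (m + 1) = ‖x - y‖ ^ (m - 1) * ‖x - y‖ ^ 2 := by
    rw [← rpow_natCast, ← rpow_add' (norm_nonneg _) (by push_cast; linarith)]
    push_cast
    ring_nf
  have htwo : (2 : ℝ) ^ m = 2 ^ (m - 1) * 2 := by
    rw [← rpow_add_one' zero_le_two (by linarith), sub_add_cancel]
  rw [inner_spow_sub_spow_sub, hsplit, htwo]
  have h2 : (0 : ℝ) ≤ 2 ^ (m - 1) := rpow_nonneg zero_le_two _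
  linarith [mul_le_mul_of_nonneg_right htriangle (sq_nonneg ‖x - y‖),
    mul_nonneg h2 hsame_sign]

lemma norm_sub_le_two_mul_norm_spow_sub_rpow (hm : 1 ≤ m) (x y : EuclideanSpace ℝ (Fin N)) :
    ‖x - y‖ ≤ 2 * ‖spow m x - spow m y‖ ^ (1 / m) := by
  have hm0 : 0 < m := by linarith
  set D := ‖spow m x - spow m y‖
  rcases (norm_nonneg (x - y)).eq_or_lt with h0 | hpos
  · rw [← h0]
    positivity
  have hmono : ‖x - y‖ ^ m * ‖x - y‖ ≤ 2 ^ m * D * ‖x - y‖ := by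
    calc ‖x - y‖ ^ m * ‖x - y‖ = ‖x - y‖ ^ (m + 1) :=
          (rpow_add_one' (norm_nonneg _) (by linarith)).symm
      _ ≤ 2 ^ m * ⟪spow m x - spow m y, x - y⟫ := norm_sub_rpow_le_two_rpow_mul_inner hm x y
      _ ≤ 2 ^ m * (D * ‖x - y‖) := by gcongr; exact real_inner_le_norm _ _
      _ = 2 ^ m * D * ‖x - y‖ := by ring
  rw [← rpow_le_rpow_iff (norm_nonneg _) (by positivity) hm0, mul_rpow zero_le_two (by positivity),
    one_div, rpow_inv_rpow (norm_nonneg _) hm0.ne']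
  exact le_of_mul_le_mul_right hmono hpos

lemma bTerm_le_two_mul (hm : 1 ≤ m) (u a : EuclideanSpace ℝ (Fin N)) :
    bTerm m u a ≤ 2 * ‖spow m u - spow m a‖ ^ ((m + 1) / m) := by
  have hm0 : 0 < m := by linarith
  set D := ‖spow m a - spow m u‖
  have hexp : D ^ (1 / m) * D = D ^ ((m + 1) / m) := by
    rw [← rpow_add_one' (norm_nonneg _) (by positivity)]
    congr 1
    field_simp
    ring
  rw [norm_sub_rev]
  calc bTerm m u a ≤ ⟪a - u, spow m a - spow m u⟫ := bTerm_le_inner hm0 u a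
    _ ≤ ‖a - u‖ * D := real_inner_le_norm _ _
    _ ≤ 2 * D ^ (1 / m) * D := by
      gcongr
      exact norm_sub_le_two_mul_norm_spow_sub_rpow hm a u
    _ = 2 * D ^ ((m + 1) / m) := by rw [mul_assoc, hexp]

end SignedPower

/-- For `m ≥ 1` there is `c = c(m)` with `b[⌊u⌋^m,⌊a⌋^m] ≤ c|⌊u⌋^m - ⌊a⌋^m|^{(m+1)/m}`. -/
theorem stmt_3 (m : ℝ) (hm : 1 ≤ m) :
    ∃ c : ℝ, 0 < c ∧ ∀ (N : ℕ) (u a : EuclideanSpace ℝ (Fin N)),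
      bTerm m u a ≤ c * ‖spow m u - spow m a‖ ^ ((m + 1) / m) :=
  ⟨2, two_pos, fun _ => bTerm_le_two_mul hm⟩
end

section
/- Let m ≥ 1. There exists a constant c = c(m) ≥ 1 such that for all u, a ∈ ℝ^N one has (1/c)·|⌊u⌋^m - ⌊a⌋^m|² ≤ (|u|^{m-1} + |a|^{m-1})·b[⌊u⌋^m, ⌊a⌋^m] ≤ c·|⌊u⌋^m - ⌊a⌋^m|², where b[⌊u⌋^m, ⌊a⌋^m] := (m/(m+1))·(|a|^{m+1} - |u|^{m+1}) - u·(⌊a⌋^m - ⌊u⌋^m). -/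
open Real

/-!
Put `x = ‖u‖`, `y = ‖a‖` and `δ = ‖u‖ ‖a‖ - ⟪u, a⟫ ∈ [0, 2xy]`. Then `|⌊u⌋^m - ⌊a⌋^m|²` and
`(m + 1) b` are affine in `δ`, equal to `(x^m - y^m)²` and `bregmanGap m x y` at `δ = 0`
(parallel vectors). Tangent-line inequalities for `t ↦ t^m`, `t^(m+1)` and `t^((m+1)/2)` show that
`|x^m - y^m|` and `bregmanGap m x y / |x - y|` are both comparable to `max x y ^ (m-1) * |x - y|`,
which settles `δ = 0`. For the lower bound the `δ`-coefficients then compare directly; for the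
upper bound we also check `δ = 2xy` (antiparallel vectors), where Chebyshev's sum inequality bounds
every term by `(x^m + y^m)²`, and interpolate.
-/

lemma rpow_tangent_le {e x y : ℝ} (he : 1 ≤ e) (hx : 0 ≤ x) (hy : 0 ≤ y) :
    y ^ e + e * y ^ (e - 1) * (x - y) ≤ x ^ e := by
  rcases hy.eq_or_lt with rfl | hy
  · rcases he.eq_or_lt with rfl | he
    · simp
    · simp [zero_rpow (by linarith : e ≠ 0), zero_rpow (by linarith : e - 1 ≠ 0), rpow_nonneg hx]
  · have key := one_add_mul_self_le_rpow_one_add (s := x / y - 1)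
      (by linarith [div_nonneg hx hy.le]) he
    rw [add_sub_cancel, div_rpow hx hy.le, le_div_iff₀ (rpow_pos_of_pos hy e)] at key
    calc y ^ e + e * y ^ (e - 1) * (x - y) = (1 + e * (x / y - 1)) * y ^ e := by
          rw [rpow_sub_one hy.ne']; field_simp
      _ ≤ x ^ e := key

lemma rpow_sub_one_mul_self {k x : ℝ} (hx : 0 ≤ x) (hk : k ≠ 0) : x ^ (k - 1) * x = x ^ k := by
  rw [← rpow_add_one' hx (by simpa using hk), sub_add_cancel]

lemma add_mul_le_add_mul_of_le_of_le {a b c d t T : ℝ} (h₀ : a ≤ b) (hT : a + c * T ≤ b + d * T)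
    (ht₀ : 0 ≤ t) (htT : t ≤ T) : a + c * t ≤ b + d * t := by
  rcases le_total c d with h | h <;> nlinarith [mul_le_mul_of_nonneg_left htT (sub_nonneg.2 h),
    mul_nonneg ht₀ (sub_nonneg.2 h)]

section Scalar

variable {k m x y : ℝ}

lemma max_rpow_le_rpow_add_rpow (hx : 0 ≤ x) (hy : 0 ≤ y) : max x y ^ k ≤ x ^ k + y ^ k := by
  rcases le_total x y with h | h
  · simpa [max_eq_right h] using rpow_nonneg hx k
  · simpa [max_eq_left h] using rpow_nonneg hy k

lemma rpow_add_rpow_le_two_mul_max_rpow (hk : 0 ≤ k) (hx : 0 ≤ x) (hy : 0 ≤ y) :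
    x ^ k + y ^ k ≤ 2 * max x y ^ k := by
  linarith [rpow_le_rpow hx (le_max_left x y) hk, rpow_le_rpow hy (le_max_right x y) hk]

lemma max_rpow_sub_one_mul_abs_sub_le (hk : 1 ≤ k) (hx : 0 ≤ x) (hy : 0 ≤ y) :
    max x y ^ (k - 1) * |x - y| ≤ |x ^ k - y ^ k| := by
  wlog hyx : y ≤ x generalizing x y
  · simpa [max_comm, abs_sub_comm] using this hy hx (le_of_not_ge hyx)
  have hmono : y ^ (k - 1) ≤ x ^ (k - 1) := rpow_le_rpow hy hyx (by linarith)
  rw [max_eq_left hyx, abs_of_nonneg (sub_nonneg.2 hyx),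
    abs_of_nonneg (sub_nonneg.2 (rpow_le_rpow hy hyx (by linarith))),
    ← rpow_sub_one_mul_self (k := k) hx (by linarith),
    ← rpow_sub_one_mul_self (k := k) hy (by linarith)]
  nlinarith [mul_le_mul_of_nonneg_right hmono hy]

lemma abs_rpow_sub_le (hm : 1 ≤ m) (hx : 0 ≤ x) (hy : 0 ≤ y) :
    |x ^ m - y ^ m| ≤ m * max x y ^ (m - 1) * |x - y| := by
  wlog hyx : y ≤ x generalizing x y
  · simpa [max_comm, abs_sub_comm] using this hy hx (le_of_not_ge hyx)
  rw [max_eq_left hyx, abs_of_nonneg (sub_nonneg.2 hyx),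
    abs_of_nonneg (sub_nonneg.2 (rpow_le_rpow hy hyx (by linarith)))]
  linarith [rpow_tangent_le hm hy hx]

/-- `(m + 1)` times the Bregman divergence `F x - F y - F' y * (x - y)` of `F t = t^(m+1)/(m+1)`. -/
noncomputable def bregmanGap (m x y : ℝ) : ℝ :=
  x ^ (m + 1) + m * y ^ (m + 1) - (m + 1) * y ^ m * x

lemma bregmanGap_nonneg (hm : 0 ≤ m) (hx : 0 ≤ x) (hy : 0 ≤ y) : 0 ≤ bregmanGap m x y := by
  have h := rpow_tangent_le (e := m + 1) (by linarith) hx hy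
  rw [add_sub_cancel_right, rpow_add_one' hy (by linarith)] at h
  rw [bregmanGap, rpow_add_one' hy (by linarith)]
  linarith

lemma bregmanGap_add_bregmanGap (hm : m + 1 ≠ 0) (hx : 0 ≤ x) (hy : 0 ≤ y) :
    bregmanGap m x y + bregmanGap m y x = (m + 1) * (x ^ m - y ^ m) * (x - y) := by
  rw [bregmanGap, bregmanGap, rpow_add_one' hx hm, rpow_add_one' hy hm]
  ring

lemma bregmanGap_le (hm : 1 ≤ m) (hx : 0 ≤ x) (hy : 0 ≤ y) :
    bregmanGap m x y ≤ m * (m + 1) * max x y ^ (m - 1) * (x - y) ^ 2 := by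
  calc bregmanGap m x y ≤ (m + 1) * (x ^ m - y ^ m) * (x - y) := by
        linarith [bregmanGap_add_bregmanGap (m := m) (by linarith) hx hy,
          bregmanGap_nonneg (m := m) (by linarith) hy hx]
    _ ≤ (m + 1) * (|x ^ m - y ^ m| * |x - y|) := by
        rw [mul_assoc, ← abs_mul]
        gcongr
        exact le_abs_self _
    _ ≤ (m + 1) * (m * max x y ^ (m - 1) * |x - y| * |x - y|) := by
        gcongr
        exact abs_rpow_sub_le hm hx hy
    _ = m * (m + 1) * max x y ^ (m - 1) * (x - y) ^ 2 := by
        rw [mul_assoc _ |x - y|, ← sq, sq_abs]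
        ring

lemma sq_rpow_half_sub_le_bregmanGap (hm : 1 ≤ m) (hx : 0 ≤ x) (hy : 0 ≤ y) :
    (x ^ ((m + 1) / 2) - y ^ ((m + 1) / 2)) ^ 2 ≤ bregmanGap m x y := by
  have hR : (x ^ ((m + 1) / 2)) ^ 2 = x ^ (m + 1) := by
    rw [← rpow_mul_natCast hx]; congr 1; push_cast; ring
  have hS : (y ^ ((m + 1) / 2)) ^ 2 = y ^ m * y := by
    rw [← rpow_mul_natCast hy, ← rpow_add_one' hy (by linarith)]; congr 1; push_cast; ring
  have hSk : y ^ ((m + 1) / 2) * y ^ ((m + 1) / 2 - 1) = y ^ m := by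
    rw [← rpow_add' hy (by linarith)]; congr 1; ring
  have htan := rpow_tangent_le (e := (m + 1) / 2) (by linarith) hx hy
  -- with `k = (m + 1) / 2`: `bregmanGap m x y - (x^k - y^k)² = 2 y^k (x^k - y^k - k y^(k-1) (x - y))`
  rw [bregmanGap, rpow_add_one' hy (by linarith)]
  linear_combination (2 * y ^ ((m + 1) / 2)) * htan + hR - hS - (m + 1) * (x - y) * hSk

lemma max_rpow_sub_one_mul_sq_le_bregmanGap (hm : 1 ≤ m) (hx : 0 ≤ x) (hy : 0 ≤ y) :
    max x y ^ (m - 1) * (x - y) ^ 2 ≤ bregmanGap m x y := by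
  have hhalf : (max x y ^ ((m + 1) / 2 - 1)) ^ 2 = max x y ^ (m - 1) := by
    rw [← rpow_mul_natCast (le_max_of_le_left hx)]; congr 1; push_cast; ring
  calc max x y ^ (m - 1) * (x - y) ^ 2 = (max x y ^ ((m + 1) / 2 - 1) * |x - y|) ^ 2 := by
        rw [mul_pow, hhalf, sq_abs]
    _ ≤ |x ^ ((m + 1) / 2) - y ^ ((m + 1) / 2)| ^ 2 := by
        gcongr
        exact max_rpow_sub_one_mul_abs_sub_le (by linarith) hx hy
    _ ≤ bregmanGap m x y := by
        rw [sq_abs]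
        exact sq_rpow_half_sub_le_bregmanGap hm hx hy

lemma sq_rpow_sub_le_mul_bregmanGap (hm : 1 ≤ m) (hx : 0 ≤ x) (hy : 0 ≤ y) :
    (x ^ m - y ^ m) ^ 2 ≤ m ^ 2 * ((x ^ (m - 1) + y ^ (m - 1)) * bregmanGap m x y) := by
  have hM : 0 ≤ max x y ^ (m - 1) := rpow_nonneg (le_max_of_le_left hx) _
  calc (x ^ m - y ^ m) ^ 2 = |x ^ m - y ^ m| ^ 2 := (sq_abs _).symm
    _ ≤ (m * max x y ^ (m - 1) * |x - y|) ^ 2 := by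
        gcongr
        exact abs_rpow_sub_le hm hx hy
    _ = m ^ 2 * (max x y ^ (m - 1) * (max x y ^ (m - 1) * (x - y) ^ 2)) := by
        rw [mul_pow, mul_pow, sq_abs]; ring
    _ ≤ m ^ 2 * ((x ^ (m - 1) + y ^ (m - 1)) * bregmanGap m x y) := by
        gcongr
        · exact max_rpow_le_rpow_add_rpow hx hy
        · exact max_rpow_sub_one_mul_sq_le_bregmanGap hm hx hy

lemma mul_bregmanGap_le_sq_rpow_sub (hm : 1 ≤ m) (hx : 0 ≤ x) (hy : 0 ≤ y) :
    (x ^ (m - 1) + y ^ (m - 1)) * bregmanGap m x y ≤ 2 * m * (m + 1) * (x ^ m - y ^ m) ^ 2 := by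
  have hM : 0 ≤ max x y ^ (m - 1) := rpow_nonneg (le_max_of_le_left hx) _
  calc (x ^ (m - 1) + y ^ (m - 1)) * bregmanGap m x y
      ≤ (2 * max x y ^ (m - 1)) * (m * (m + 1) * max x y ^ (m - 1) * (x - y) ^ 2) :=
        mul_le_mul (rpow_add_rpow_le_two_mul_max_rpow (by linarith) hx hy)
          (bregmanGap_le hm hx hy) (bregmanGap_nonneg (by linarith) hx hy) (by positivity)
    _ = 2 * m * (m + 1) * (max x y ^ (m - 1) * |x - y|) ^ 2 := by
        rw [mul_pow, sq_abs]; ring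
    _ ≤ 2 * m * (m + 1) * |x ^ m - y ^ m| ^ 2 := by
        gcongr
        exact max_rpow_sub_one_mul_abs_sub_le hm hx hy
    _ = 2 * m * (m + 1) * (x ^ m - y ^ m) ^ 2 := by rw [sq_abs]

lemma mul_bregmanGap_add_le_sq_rpow_add (hm : 1 ≤ m) (hx : 0 ≤ x) (hy : 0 ≤ y) :
    (x ^ (m - 1) + y ^ (m - 1)) * (bregmanGap m x y + 2 * (m + 1) * y ^ m * x) ≤
      4 * (m + 1) * (x ^ m + y ^ m) ^ 2 := by
  have hcheb : 0 ≤ (x ^ (m - 1) - y ^ (m - 1)) * (x - y) := by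
    rcases le_total x y with h | h
    · exact mul_nonneg_of_nonpos_of_nonpos
        (sub_nonpos.2 (rpow_le_rpow hx h (by linarith))) (sub_nonpos.2 h)
    · exact mul_nonneg (sub_nonneg.2 (rpow_le_rpow hy h (by linarith))) (sub_nonneg.2 h)
  rw [bregmanGap, rpow_add_one' hx (by linarith), rpow_add_one' hy (by linarith),
    ← rpow_sub_one_mul_self (k := m) hx (by linarith),
    ← rpow_sub_one_mul_self (k := m) hy (by linarith)]
  have hp := rpow_nonneg hx (m - 1)
  have hq := rpow_nonneg hy (m - 1)
  generalize x ^ (m - 1) = p at *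
  generalize y ^ (m - 1) = q at *
  have hX : 0 ≤ p * x := mul_nonneg hp hx
  have hY : 0 ≤ q * y := mul_nonneg hq hy
  have hpy : p * y ≤ p * x + q * y := by nlinarith [mul_nonneg hq hx]
  have hqx : q * x ≤ p * x + q * y := by nlinarith [mul_nonneg hp hy]
  have hm0 : 0 ≤ m := by linarith
  have hpyQ : p * y * (q * y) ≤ (p * x + q * y) ^ 2 := by
    rw [sq]; exact mul_le_mul hpy (le_add_of_nonneg_left hX) hY (by positivity)
  have hPqx : p * x * (q * x) ≤ (p * x + q * y) ^ 2 := by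
    rw [sq]; exact mul_le_mul (le_add_of_nonneg_right hY) hqx (mul_nonneg hq hx) (by positivity)
  have hQqx : q * y * (q * x) ≤ (p * x + q * y) ^ 2 := by
    rw [sq]; exact mul_le_mul (le_add_of_nonneg_left hX) hqx (mul_nonneg hq hx) (by positivity)
  nlinarith [mul_le_mul_of_nonneg_left hpyQ hm0, mul_le_mul_of_nonneg_left hQqx hm0,
    mul_nonneg hm0 (mul_nonneg hX hY), mul_nonneg hm0 (sq_nonneg (p * x)), mul_nonneg hX hY]

end Scalar

section Vector

variable {m : ℝ} {N : ℕ} (u a : EuclideanSpace ℝ (Fin N))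

lemma norm_spow_sub_spow_sq (hm : m ≠ 0) :
    ‖spow m u - spow m a‖ ^ 2 = (‖u‖ ^ m - ‖a‖ ^ m) ^ 2 +
      2 * (‖u‖ ^ (m - 1) * ‖a‖ ^ (m - 1)) * (‖u‖ * ‖a‖ - inner ℝ u a) := by
  rw [spow, spow, norm_sub_sq_real, norm_smul, norm_smul, real_inner_smul_left,
    real_inner_smul_right, norm_of_nonneg (rpow_nonneg (norm_nonneg u) _),
    norm_of_nonneg (rpow_nonneg (norm_nonneg a) _),
    ← rpow_sub_one_mul_self (norm_nonneg u) hm, ← rpow_sub_one_mul_self (norm_nonneg a) hm]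
  ring

lemma add_one_mul_bTerm (hm : 0 < m) :
    (m + 1) * bTerm m u a = bregmanGap m ‖u‖ ‖a‖ +
      (m + 1) * ‖a‖ ^ (m - 1) * (‖u‖ * ‖a‖ - inner ℝ u a) := by
  rw [bTerm, bregmanGap, spow, spow, inner_sub_right, real_inner_smul_right,
    real_inner_smul_right, real_inner_self_eq_norm_sq, rpow_add_one' (norm_nonneg u) (by linarith),
    ← rpow_sub_one_mul_self (norm_nonneg u) hm.ne', ← rpow_sub_one_mul_self (norm_nonneg a) hm.ne']
  field_simp
  ring

lemma sq_norm_spow_sub_spow_le (hm : 1 ≤ m) :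
    ‖spow m u - spow m a‖ ^ 2 ≤
      (m + 1) ^ 3 * ((‖u‖ ^ (m - 1) + ‖a‖ ^ (m - 1)) * bTerm m u a) := by
  have hx := norm_nonneg u
  have hy := norm_nonneg a
  have hb := add_one_mul_bTerm u a (by linarith : 0 < m)
  have hXY := sq_rpow_sub_le_mul_bregmanGap hm hx hy
  rw [norm_spow_sub_spow_sq u a (by linarith)]
  have hδ : 0 ≤ ‖u‖ * ‖a‖ - inner ℝ u a := sub_nonneg.2 (real_inner_le_norm u a)
  set δ := ‖u‖ * ‖a‖ - inner ℝ u a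
  have hp := rpow_nonneg hx (m - 1)
  have hq := rpow_nonneg hy (m - 1)
  set p := ‖u‖ ^ (m - 1)
  set q := ‖a‖ ^ (m - 1)
  have hE := bregmanGap_nonneg (by linarith : 0 ≤ m) hx hy
  have h8 : (2 : ℝ) ^ 3 ≤ (m + 1) ^ 3 := by gcongr; linarith
  have h2p : 2 * p ≤ (m + 1) ^ 3 * (p + q) := by nlinarith
  calc (‖u‖ ^ m - ‖a‖ ^ m) ^ 2 + 2 * (p * q) * δ
      ≤ (m + 1) ^ 2 * ((p + q) * bregmanGap m ‖u‖ ‖a‖) + (m + 1) ^ 3 * (p + q) * (q * δ) := by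
        gcongr ?_ + ?_
        · exact hXY.trans (by gcongr; linarith)
        · rw [show 2 * (p * q) * δ = 2 * p * (q * δ) by ring]
          exact mul_le_mul_of_nonneg_right h2p (by positivity)
    _ = (m + 1) ^ 3 * ((p + q) * bTerm m u a) := by linear_combination -(m + 1) ^ 2 * (p + q) * hb

lemma mul_bTerm_le_sq_norm_spow_sub_spow (hm : 1 ≤ m) :
    (‖u‖ ^ (m - 1) + ‖a‖ ^ (m - 1)) * bTerm m u a ≤
      (m + 1) ^ 3 * ‖spow m u - spow m a‖ ^ 2 := by
  have hx := norm_nonneg u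
  have hy := norm_nonneg a
  have hb := add_one_mul_bTerm u a (by linarith : 0 < m)
  have hsame := mul_bregmanGap_le_sq_rpow_sub hm hx hy
  have hopp := mul_bregmanGap_add_le_sq_rpow_add hm hx hy
  have hδ₀ : 0 ≤ ‖u‖ * ‖a‖ - inner ℝ u a := sub_nonneg.2 (real_inner_le_norm u a)
  have hδT : ‖u‖ * ‖a‖ - inner ℝ u a ≤ 2 * (‖u‖ * ‖a‖) := by
    linarith [(abs_le.mp (abs_real_inner_le_norm u a)).1]
  have h8 : (2 : ℝ) ^ 3 ≤ (m + 1) ^ 3 := by gcongr; linarith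
  have h4 : 4 * (m + 1) ≤ (m + 1) ^ 4 := by nlinarith
  have h2m : 2 * m * (m + 1) ≤ (m + 1) ^ 4 := by nlinarith
  rw [norm_spow_sub_spow_sq u a (by linarith)]
  rw [← rpow_sub_one_mul_self hx (by linarith : m ≠ 0),
    ← rpow_sub_one_mul_self hy (by linarith : m ≠ 0)] at hsame hopp ⊢
  set δ := ‖u‖ * ‖a‖ - inner ℝ u a
  set p := ‖u‖ ^ (m - 1)
  set q := ‖a‖ ^ (m - 1)
  set E := bregmanGap m ‖u‖ ‖a‖
  have h₀ : (p + q) * E ≤ (m + 1) ^ 4 * (p * ‖u‖ - q * ‖a‖) ^ 2 :=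
    hsame.trans (by gcongr)
  have hT : (p + q) * E + (p + q) * (m + 1) * q * (2 * (‖u‖ * ‖a‖)) ≤
      (m + 1) ^ 4 * (p * ‖u‖ - q * ‖a‖) ^ 2 + (m + 1) ^ 4 * 2 * (p * q) * (2 * (‖u‖ * ‖a‖)) := by
    calc _ = (p + q) * (E + 2 * (m + 1) * (q * ‖a‖) * ‖u‖) := by ring
      _ ≤ 4 * (m + 1) * (p * ‖u‖ + q * ‖a‖) ^ 2 := hopp
      _ ≤ (m + 1) ^ 4 * (p * ‖u‖ + q * ‖a‖) ^ 2 := by gcongr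
      _ = _ := by ring
  have key := add_mul_le_add_mul_of_le_of_le h₀ hT hδ₀ hδT
  refine le_of_mul_le_mul_left ?_ (by linarith : (0:ℝ) < m + 1)
  linear_combination key + (p + q) * hb

end Vector

/-- For `m ≥ 1` there is `c = c(m) ≥ 1` with
`(1/c)|⌊u⌋^m - ⌊a⌋^m|² ≤ (|u|^{m-1} + |a|^{m-1}) b[⌊u⌋^m,⌊a⌋^m] ≤ c|⌊u⌋^m - ⌊a⌋^m|²`. -/
theorem stmt_4 (m : ℝ) (hm : 1 ≤ m) :
    ∃ c : ℝ, 1 ≤ c ∧ ∀ (N : ℕ) (u a : EuclideanSpace ℝ (Fin N)),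
      (1 / c) * ‖spow m u - spow m a‖ ^ 2 ≤
        (‖u‖ ^ (m - 1) + ‖a‖ ^ (m - 1)) * bTerm m u a ∧
      (‖u‖ ^ (m - 1) + ‖a‖ ^ (m - 1)) * bTerm m u a ≤
        c * ‖spow m u - spow m a‖ ^ 2 := by
  refine ⟨(m + 1) ^ 3, one_le_pow₀ (by linarith), fun N u a =>
    ⟨?_, mul_bTerm_le_sq_norm_spow_sub_spow u a hm⟩⟩
  rw [one_div_mul_eq_div, div_le_iff₀ (by positivity), mul_comm]
  exact sq_norm_spow_sub_spow_le u a hm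
end
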